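/- There exists a Z2Z4-additive code C ⊆ Z2^3 × Z4^3 such that φ(C_Y) is a linear binary code but Φ(C) is not linear. Specifically, the code generated (as a subgroup) by the rows (1,0,0|0,0,0), (0,1,0|0,0,0), (0,0,1|2,0,0), (0,0,0|1,1,0), (0,0,0|1,0,1) has this property. -/

import Mathlib

open Polynomial

noncomputable section

abbrev Z2 := ZMod 2
abbrev Z4 := ZMod 4

/-- Coefficientwise reduction modulo 2. -/
def ρ : Z4 →+* Z2 := ZMod.castHom (show 2 ∣ 4 by norm_num) Z2

/-- The quotient ring `R[x]/(x^n - 1)`. -/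
abbrev QR (R : Type) [CommRing R] (n : ℕ) :=
  Polynomial R ⧸ Ideal.span {(Polynomial.X : Polynomial R) ^ n - 1}

def pmk {R : Type} [CommRing R] (n : ℕ) (p : Polynomial R) : QR R n :=
  Ideal.Quotient.mk _ p

/-- `Z4[x]`-module structure on `Z2[x]/(x^n-1)` via reduction mod 2;
this gives the action `p ⋆ (b | a) = (p̃ b | p a)` on the product. -/
instance (n : ℕ) : Module (Polynomial Z4) (QR Z2 n) :=
  Module.compHom _ ((Ideal.Quotient.mk _).comp (mapRingHom ρ) : Polynomial Z4 →+* QR Z2 n)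

def hat (u : Z4) : Z2 := ((u.val / 2 : ℕ) : Z2)

def til (u : Z4) : Z2 := ((u.val : ℕ) : Z2)

/-- The Gray map `φ(u') = (û' | ũ' + û')`, with the second block of coordinates
indexed by the right summand. -/
def gray {ι : Type} (u : ι → Z4) : (ι ⊕ ι) → Z2 :=
  Sum.elim (fun i => hat (u i)) (fun i => til (u i) + hat (u i))

/-- The extended Gray map `Φ(u | u') = (u | φ(u'))`. -/
def extGray {ι κ : Type} (v : (ι → Z2) × (κ → Z4)) : (ι → Z2) × ((κ ⊕ κ) → Z2) :=
  (v.1, gray v.2)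

/-- Identification of `Z2^n` with `Z2[x]/(x^n-1)`. -/
def toQ2 {n : ℕ} (u : Fin n → Z2) : QR Z2 n :=
  pmk n (∑ i, Polynomial.C (u i) * Polynomial.X ^ (i : ℕ))

/-- Identification of `Z4^n` with `Z4[x]/(x^n-1)`. -/
def toQ4 {n : ℕ} (u : Fin n → Z4) : QR Z4 n :=
  pmk n (∑ i, Polynomial.C (u i) * Polynomial.X ^ (i : ℕ))

/-- The standard polynomial identification of `Z2^α × Z4^β` with `R_{α,β}`. -/
def ident {α β : ℕ} (v : (Fin α → Z2) × (Fin β → Z4)) : QR Z2 α × QR Z4 β :=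
  (toQ2 v.1, toQ4 v.2)

/-- Right cyclic shift: `(u_0,…,u_{n-1}) ↦ (u_{n-1},u_0,…,u_{n-2})`. -/
def shiftR {n : ℕ} {R : Type} (u : Fin n → R) : Fin n → R :=
  fun i => u ((finRotate n).symm i)

/-- Simultaneous cyclic shift on both blocks of `Z2^α × Z4^β`. -/
def bshift {α β : ℕ} (v : (Fin α → Z2) × (Fin β → Z4)) : (Fin α → Z2) × (Fin β → Z4) :=
  (shiftR v.1, shiftR v.2)

/-- `IsTensorSquare n p q` says that `q = (p ⊗ p)`: `q` is the (monic) divisor of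
`x^n - 1` in `Z2[x]` whose roots (in the splitting field of `x^n-1`) are exactly the
products of pairs of roots of `p`. -/
def IsTensorSquare (n : ℕ) (p q : Polynomial Z2) : Prop :=
  q ∣ (Polynomial.X ^ n - 1) ∧ q.Monic ∧
    ∀ z : ((Polynomial.X : Polynomial Z2) ^ n - 1).SplittingField,
      Polynomial.aeval z q = 0 ↔
        ∃ z₁ z₂, Polynomial.aeval z₁ p = 0 ∧ Polynomial.aeval z₂ p = 0 ∧ z = z₁ * z₂

/-- The Nechaev permutation on `Z2^{2n}` (coordinates indexed by `Fin n ⊕ Fin n`,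
with `inr i` standing for position `n + i`): it swaps positions `2i+1` and `n + 2i+1`. -/
def nechaev {n : ℕ} (v : (Fin n ⊕ Fin n) → Z2) : (Fin n ⊕ Fin n) → Z2 :=
  Sum.elim (fun i => if Odd (i : ℕ) then v (Sum.inr i) else v (Sum.inl i))
    (fun i => if Odd (i : ℕ) then v (Sum.inl i) else v (Sum.inr i))

/-- The extended Nechaev–Gray map `Ψ(u | u') = (u | σ(φ(u')))`. -/
def nechaevGrayExt {α β : ℕ} (v : (Fin α → Z2) × (Fin β → Z4)) :
    (Fin α → Z2) × ((Fin β ⊕ Fin β) → Z2) :=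
  (v.1, nechaev (gray v.2))

/-- Identification of `Z2^{2n}` (indexed by `Fin n ⊕ Fin n`) with `Z2[x]/(x^{2n}-1)`. -/
def toQ2D {n : ℕ} (w : (Fin n ⊕ Fin n) → Z2) : QR Z2 (2 * n) :=
  pmk (2 * n) (∑ i : Fin n,
    (Polynomial.C (w (Sum.inl i)) * Polynomial.X ^ (i : ℕ) +
      Polynomial.C (w (Sum.inr i)) * Polynomial.X ^ (n + (i : ℕ))))

/-- Identification of `Z2^α × Z2^{2β}` with `Z2[x]/(x^α-1) × Z2[x]/(x^{2β}-1)`. -/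
def pairD {α β : ℕ} (v : (Fin α → Z2) × ((Fin β ⊕ Fin β) → Z2)) :
    QR Z2 α × QR Z2 (2 * β) :=
  (toQ2 v.1, toQ2D v.2)

def leeWt (u : Z4) : ℕ := min u.val (4 - u.val)

def leeDist {n : ℕ} (u v : Fin n → Z4) : ℕ := ∑ i, leeWt (u i - v i)

/-
Over `Z4` one has `φ(u) + φ(v) = φ(u + v + 2(u*v))` coordinatewise, and `Φ` is injective. Hence,
if `Φ(C)` is linear, then `C` contains `(0 | 2(u'*v'))` for all `u, v ∈ C`; conversely `φ(D)` is
linear as soon as `D` is closed under `(u', v') ↦ 2(u'*v')`. Here `C_Y` contains all of `2 Z4^3`,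
so `φ(C_Y)` is linear, while the check `x ↦ x'₀ - x'₁ - x'₂ - 2x₂` vanishes on `C` but not on
`(0,0,0 | 2,0,0) = (0 | 2((1,1,0) * (1,0,1)))`.
-/

theorem hat_add (a b : Z4) : hat a + hat b = hat (a + b + 2 * (a * b)) := by
  revert a b; decide

theorem til_add (a b : Z4) : til a + til b = til (a + b + 2 * (a * b)) := by
  revert a b; decide

theorem eq_of_hat_eq_of_til_eq {a b : Z4} (hhat : hat a = hat b) (htil : til a = til b) :
    a = b := by
  revert a b; decide

theorem gray_add {ι : Type} (u v : ι → Z4) : gray u + gray v = gray (u + v + 2 * (u * v)) := by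
  ext (i | i)
  · exact hat_add (u i) (v i)
  · simp only [gray, Pi.add_apply, Sum.elim_inr, Pi.mul_apply, Pi.ofNat_apply]
    rw [← hat_add, ← til_add]
    ring

theorem gray_zero {ι : Type} : gray (0 : ι → Z4) = 0 := by
  ext (i | i) <;> simp [gray, hat, til]

theorem gray_injective {ι : Type} : Function.Injective (gray (ι := ι)) := by
  intro u v h
  funext i
  have hhat : hat (u i) = hat (v i) := congrFun h (.inl i)
  have hsum : til (u i) + hat (u i) = til (v i) + hat (v i) := congrFun h (.inr i)
  rw [hhat, add_left_inj] at hsum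
  exact eq_of_hat_eq_of_til_eq hhat hsum

theorem extGray_add {ι κ : Type} (u v : (ι → Z2) × (κ → Z4)) :
    extGray u + extGray v = extGray (u + v + (0, 2 * (u.2 * v.2))) := by
  simp only [extGray, Prod.mk_add_mk, Prod.fst_add, Prod.snd_add, add_zero, gray_add]

theorem extGray_injective {ι κ : Type} : Function.Injective (extGray (ι := ι) (κ := κ)) :=
  fun _ _ h => Prod.ext (Prod.ext_iff.mp h).1 (gray_injective (Prod.ext_iff.mp h).2)

theorem exists_submodule_coe_eq_of_add_mem {G : Type*} [AddCommGroup G] [Module Z2 G] {s : Set G}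
    (zero_mem : (0 : G) ∈ s) (add_mem : ∀ x ∈ s, ∀ y ∈ s, x + y ∈ s) :
    ∃ T : Submodule Z2 G, (T : Set G) = s :=
  ⟨AddSubgroup.toZModSubmodule 2
    { carrier := s
      zero_mem' := zero_mem
      add_mem' := fun {x y} hx hy => add_mem x hx y hy
      neg_mem' := fun {x} hx => by rwa [ZModModule.neg_eq_self] }, rfl⟩

theorem exists_submodule_coe_eq_gray_image {ι : Type} (D : AddSubgroup (ι → Z4))
    (hD : ∀ u ∈ D, ∀ v ∈ D, 2 * (u * v) ∈ D) :
    ∃ T : Submodule Z2 ((ι ⊕ ι) → Z2), (T : Set _) = gray '' (D : Set (ι → Z4)) := by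
  refine exists_submodule_coe_eq_of_add_mem ⟨0, D.zero_mem, gray_zero⟩ ?_
  rintro _ ⟨u, hu, rfl⟩ _ ⟨v, hv, rfl⟩
  exact ⟨_, D.add_mem (D.add_mem hu hv) (hD u hu v hv), (gray_add u v).symm⟩

theorem two_mul_mem_of_extGray_image {ι κ : Type} {C : AddSubgroup ((ι → Z2) × (κ → Z4))}
    {S : Submodule Z2 ((ι → Z2) × ((κ ⊕ κ) → Z2))}
    (hS : (S : Set _) = extGray '' (C : Set ((ι → Z2) × (κ → Z4))))
    {u v : (ι → Z2) × (κ → Z4)} (hu : u ∈ C) (hv : v ∈ C) :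
    ((0 : ι → Z2), 2 * (u.2 * v.2)) ∈ C := by
  have mem_S : ∀ x ∈ C, extGray x ∈ S := fun x hx => by
    rw [← SetLike.mem_coe, hS]
    exact Set.mem_image_of_mem _ hx
  obtain ⟨w, hw, hwuv⟩ : extGray u + extGray v ∈ extGray '' (C : Set _) :=
    hS ▸ S.add_mem (mem_S u hu) (mem_S v hv)
  rw [extGray_add, extGray_injective.eq_iff] at hwuv
  rw [show ((0 : ι → Z2), 2 * (u.2 * v.2)) = w - u - v by rw [hwuv]; abel]
  exact C.sub_mem (C.sub_mem hw hu) hv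

theorem two_mul_mem_of_single_two_mem {ι : Type} [Fintype ι] [DecidableEq ι]
    {D : AddSubgroup (ι → Z4)} (hD : ∀ i, Pi.single i 2 ∈ D) (w : ι → Z4) : 2 * w ∈ D := by
  have hw : 2 * w = ∑ i, w i • Pi.single i (2 : Z4) := by
    ext j
    simp [Finset.sum_apply, Pi.single_apply, mul_comm]
  rw [hw]
  exact D.sum_mem fun i _ => ZMod.smul_mem (hD i) (w i)

def exampleCode : AddSubgroup ((Fin 3 → Z2) × (Fin 3 → Z4)) :=
  AddSubgroup.closure
    {((![1,0,0] : Fin 3 → Z2), (![0,0,0] : Fin 3 → Z4)),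
     (![0,1,0], ![0,0,0]),
     (![0,0,1], ![2,0,0]),
     (![0,0,0], ![1,1,0]),
     (![0,0,0], ![1,0,1])}

def doubleLift : Z2 →+ Z4 where
  toFun a := 2 * a.val
  map_zero' := rfl
  map_add' := by decide

def exampleCheck : ((Fin 3 → Z2) × (Fin 3 → Z4)) →+ Z4 where
  toFun x := x.2 0 - x.2 1 - x.2 2 - doubleLift (x.1 2)
  map_zero' := by simp
  map_add' x y := by
    simp only [Prod.fst_add, Prod.snd_add, Pi.add_apply, map_add]
    ring

theorem exampleCode_le_ker_exampleCheck : exampleCode ≤ exampleCheck.ker := by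
  rw [exampleCode, AddSubgroup.closure_le]
  rintro x (rfl | rfl | rfl | rfl | rfl) <;> exact AddMonoidHom.mem_ker.mpr (by decide)

theorem row₃_mem_exampleCode : (![(0 : Z2), 0, 1], ![(2 : Z4), 0, 0]) ∈ exampleCode :=
  AddSubgroup.subset_closure (.inr (.inr (.inl rfl)))

theorem row₄_mem_exampleCode : (![(0 : Z2), 0, 0], ![(1 : Z4), 1, 0]) ∈ exampleCode :=
  AddSubgroup.subset_closure (.inr (.inr (.inr (.inl rfl))))

theorem row₅_mem_exampleCode : (![(0 : Z2), 0, 0], ![(1 : Z4), 0, 1]) ∈ exampleCode :=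
  AddSubgroup.subset_closure (.inr (.inr (.inr (.inr rfl))))

theorem single_two_mem_map_snd_exampleCode (i : Fin 3) :
    Pi.single i 2 ∈ exampleCode.map (AddMonoidHom.snd _ _) := by
  set D := exampleCode.map (AddMonoidHom.snd _ _)
  have h₃ := AddSubgroup.mem_map_of_mem (AddMonoidHom.snd _ _) row₃_mem_exampleCode
  have h₄ := AddSubgroup.mem_map_of_mem (AddMonoidHom.snd _ _) row₄_mem_exampleCode
  have h₅ := AddSubgroup.mem_map_of_mem (AddMonoidHom.snd _ _) row₅_mem_exampleCode
  fin_cases i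
  · convert h₃ using 1; decide
  · convert D.sub_mem (D.nsmul_mem h₄ 2) h₃ using 1; decide
  · convert D.sub_mem (D.nsmul_mem h₅ 2) h₃ using 1; decide

/-- There is a `Z2Z4`-additive code `C ⊆ Z2^3 × Z4^3` (the one generated by
the listed rows) such that `φ(C_Y)` is linear but `Φ(C)` is not linear. -/
theorem example_CY_linear_C_not_linear :
    ∃ C : AddSubgroup ((Fin 3 → Z2) × (Fin 3 → Z4)),
      C = AddSubgroup.closure
          {((![1,0,0] : Fin 3 → Z2), (![0,0,0] : Fin 3 → Z4)),
           (![0,1,0], ![0,0,0]),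
           (![0,0,1], ![2,0,0]),
           (![0,0,0], ![1,1,0]),
           (![0,0,0], ![1,0,1])} ∧
      (∃ T : Submodule Z2 ((Fin 3 ⊕ Fin 3) → Z2),
          (T : Set _) = gray (ι := Fin 3) ''
            (Prod.snd '' (C : Set ((Fin 3 → Z2) × (Fin 3 → Z4))))) ∧
      ¬ ∃ S : Submodule Z2 ((Fin 3 → Z2) × ((Fin 3 ⊕ Fin 3) → Z2)),
          (S : Set _) = extGray (ι := Fin 3) (κ := Fin 3) '' (C : Set _) := by
  refine ⟨exampleCode, rfl, ?_, ?_⟩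
  · exact exists_submodule_coe_eq_gray_image _ fun u _ v _ =>
      two_mul_mem_of_single_two_mem single_two_mem_map_snd_exampleCode _
  · rintro ⟨S, hS⟩
    have hmem := two_mul_mem_of_extGray_image hS row₄_mem_exampleCode row₅_mem_exampleCode
    exact absurd (exampleCode_le_ker_exampleCheck hmem) (by decide)
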